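/- Double contraction of the integrability condition (equation (7), flat space). Let n ≥ 3, and let W_{abcd} (twice continuously differentiable) and L_{abc} (three times continuously differentiable, with L_{abc} = L_{[ab]c} and L_{ab}^{b} = 0) be tensor fields on flat ℝⁿ satisfying equation (5), with W additionally satisfying W_{abcd} = W_{[ab]cd} = W_{ab[cd]}, W_{abcd} = W_{cdab} and W^a_{bad} = 0. Then W^{ai}_{cj;i}^{j} = ((n−3)/(n−2)) ( L^{ai}_{c;ij}^{j} + L_{c}^{ia}_{;ij}^{j} − L^{ji}_{c;ij}^{a} − L_{c}^{ij}_{;ij}^{a} − L^{ai}_{j;ic}^{j} − L_{j}^{ia}_{;ic}^{j} ). -/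

import Mathlib

open scoped ContDiff

noncomputable section

/-- Partial derivative `∂ᵢ f` of a scalar field on flat `ℝⁿ` (points represented as
`Fin n → ℝ`, standard coordinates) in the `i`-th coordinate direction.  In Cartesian
coordinates on flat space this is the covariant derivative `;i`. -/
def pd {n : ℕ} (i : Fin n) (f : (Fin n → ℝ) → ℝ) : (Fin n → ℝ) → ℝ :=
  fun x => fderiv ℝ f x (Pi.single i 1)

/-- Components `η_{ab}` of the constant diagonal metric with diagonal entries `η a = ±1`;
since the entries are `±1` these coincide with the components `η^{ab}` of the inverse
metric. -/
def gm {n : ℕ} (η : Fin n → ℝ) (a b : Fin n) : ℝ := if a = b then η a else 0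

/-- Antisymmetrization over two index slots. -/
def asym2 {n : ℕ} (T : Fin n → Fin n → ℝ) (a b : Fin n) : ℝ := (T a b - T b a) / 2

/-- Antisymmetrization over three index slots. -/
def asym3 {n : ℕ} (T : Fin n → Fin n → Fin n → ℝ) (a b c : Fin n) : ℝ :=
  (T a b c - T a c b - T b a c + T b c a + T c a b - T c b a) / 6

/-- Simultaneous antisymmetrization over a pair of upper slots and a pair of lower slots. -/
def asym22 {n : ℕ} (T : Fin n → Fin n → Fin n → Fin n → ℝ) (a b c d : Fin n) : ℝ :=
  (T a b c d - T b a c d - T a b d c + T b a d c) / 4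

/-- Simultaneous antisymmetrization over a triple of upper slots and a triple of lower
slots (arguments ordered as `T upper₁ upper₂ upper₃ lower₁ lower₂ lower₃`). -/
def asym33 {n : ℕ} (T : Fin n → Fin n → Fin n → Fin n → Fin n → Fin n → ℝ)
    (a b f c d e : Fin n) : ℝ :=
  asym3 (fun a b f => asym3 (fun c d e => T a b f c d e) c d e) a b f

/-- A Weyl candidate: a 4-tensor field with the index symmetries (3a)–(3d):
antisymmetry in the first and in the second index pair, symmetry under interchange of the
two pairs, vanishing cyclic sum `W_{a[bcd]} = 0`, and vanishing trace `W^a{}_{bad} = 0`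
(the trace being taken with the metric `η`). -/
def WeylCandidate {n : ℕ} (η : Fin n → ℝ)
    (W : (Fin n → ℝ) → Fin n → Fin n → Fin n → Fin n → ℝ) : Prop :=
  (∀ x a b c d, W x a b c d = - W x b a c d) ∧
  (∀ x a b c d, W x a b c d = - W x a b d c) ∧
  (∀ x a b c d, W x a b c d = W x c d a b) ∧
  (∀ x a b c d, asym3 (fun b c d => W x a b c d) b c d = 0) ∧
  (∀ x b d, ∑ a, η a * W x a b a d = 0)

/-- The right-hand side of the Lanczos potential equation (4), in the equivalent fully
lowered form (the free indices `a b`, raised in the paper, are lowered with the invertible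
diagonal metric `η`, which only multiplies each component equation by `η a * η b ≠ 0`).
Each contracted (dummy) index pair carries a factor `η i` coming from the inverse
metric. -/
def rhs4 {n : ℕ} (η : Fin n → ℝ) (L : (Fin n → ℝ) → Fin n → Fin n → Fin n → ℝ)
    (x : Fin n → ℝ) (a b c d : Fin n) : ℝ :=
  -- 2 L^{ab}{}_{[c;d]}
  (pd d (L · a b c) x - pd c (L · a b d) x)
  -- + 2 L_{cd}{}^{[a;b]}
  + (pd b (L · c d a) x - pd a (L · c d b) x)
  -- − (4/(n−2)) δ^{[a}_{[c} ( L^{b]i}{}_{d];i} − L^{b]i}{}_{|i|;d]} + L_{d]i}{}^{b];i} − L_{d]i}{}^{|i|;b]} )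
  - (4 / ((n : ℝ) - 2)) *
      asym22 (fun a b c d =>
        gm η a c *
          ∑ i, η i *
            (pd i (L · b i d) x - pd d (L · b i i) x
              + pd i (L · d i b) x - pd b (L · d i i) x)) a b c d
  -- + (8/((n−2)(n−1))) δ^{a}_{[c} δ^{b}_{d]} L^{ij}{}_{i;j}
  + (8 / (((n : ℝ) - 2) * ((n : ℝ) - 1))) *
      ((gm η a c * gm η b d - gm η a d * gm η b c) / 2) *
      ∑ i, ∑ j, η i * η j * pd j (L · i j i) x

/-- Equation (4): `L` is a Lanczos potential for `W` (fully lowered, equivalent form). -/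
def Eq4 {n : ℕ} (η : Fin n → ℝ)
    (W : (Fin n → ℝ) → Fin n → Fin n → Fin n → Fin n → ℝ)
    (L : (Fin n → ℝ) → Fin n → Fin n → Fin n → ℝ) : Prop :=
  ∀ x a b c d, W x a b c d = rhs4 η L x a b c d

/-- The right-hand side of equation (5) (equation (4) in the Lanczos algebraic gauge
`L_{ab}{}^b = 0`), fully lowered form:
`2 L^{ab}{}_{[c;d]} + 2 L_{cd}{}^{[a;b]} − (4/(n−2)) δ^{[a}_{[c} ( L^{b]i}{}_{d];i} + L_{d]i}{}^{b];i} )`. -/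
def rhs5 {n : ℕ} (η : Fin n → ℝ) (L : (Fin n → ℝ) → Fin n → Fin n → Fin n → ℝ)
    (x : Fin n → ℝ) (a b c d : Fin n) : ℝ :=
  (pd d (L · a b c) x - pd c (L · a b d) x)
  + (pd b (L · c d a) x - pd a (L · c d b) x)
  - (4 / ((n : ℝ) - 2)) *
      asym22 (fun a b c d =>
        gm η a c * ∑ i, η i * (pd i (L · b i d) x + pd i (L · d i b) x)) a b c d

/-- Equation (5). -/
def Eq5 {n : ℕ} (η : Fin n → ℝ)
    (W : (Fin n → ℝ) → Fin n → Fin n → Fin n → Fin n → ℝ)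
    (L : (Fin n → ℝ) → Fin n → Fin n → Fin n → ℝ) : Prop :=
  ∀ x a b c d, W x a b c d = rhs5 η L x a b c d

/-- Constraint (8), fully lowered form:
`W^{[ab}{}_{[cd;e]}{}^{f]} = (1/(n−4)) δ^{[a}_{[c} W^{bf]}{}_{de];i}{}^{i}
 + (2/(n−4)) δ^{[a}_{[c} W^{|i|b}{}_{de];i}{}^{f]} + (2/(n−4)) δ^{[a}_{[c} W^{bf]}{}_{|i|d;e]}{}^{i}
 + (4/((n−3)(n−4))) δ^{[a}_{[c} δ^{b}_{d} W^{f]i}{}_{e]j;i}{}^{j}`. -/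
def Constraint8 {n : ℕ} (η : Fin n → ℝ)
    (W : (Fin n → ℝ) → Fin n → Fin n → Fin n → Fin n → ℝ) : Prop :=
  ∀ x a b f c d e,
    asym33 (fun a b f c d e => pd f (pd e (W · a b c d)) x) a b f c d e =
      (1 / ((n : ℝ) - 4)) *
          asym33 (fun a b f c d e =>
            gm η a c * ∑ i, η i * pd i (pd i (W · b f d e)) x) a b f c d e
      + (2 / ((n : ℝ) - 4)) *
          asym33 (fun a b f c d e =>
            gm η a c * ∑ i, η i * pd f (pd i (W · i b d e)) x) a b f c d e
      + (2 / ((n : ℝ) - 4)) *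
          asym33 (fun a b f c d e =>
            gm η a c * ∑ i, η i * pd i (pd e (W · b f i d)) x) a b f c d e
      + (4 / (((n : ℝ) - 3) * ((n : ℝ) - 4))) *
          asym33 (fun a b f c d e =>
            gm η a c * gm η b d *
              ∑ i, ∑ j, η i * η j * pd j (pd i (W · f i e j)) x) a b f c d e

/-- Constraint (10), fully lowered form:
`W^{[ab}{}_{cd;i}{}^{|i|e]} + 2 W^{[ab}{}_{i[c;d]}{}^{|i|e]}
 + (4/(n−3)) δ^{[a}_{[c} W^{b|i}{}_{d]j;i}{}^{j|e]} = 0`,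
antisymmetrized over the upper indices `a b e` and (where indicated) the lower indices
`c d`. -/
def Constraint10 {n : ℕ} (η : Fin n → ℝ)
    (W : (Fin n → ℝ) → Fin n → Fin n → Fin n → Fin n → ℝ) : Prop :=
  ∀ x a b e c d,
    asym3 (fun a b e =>
      (∑ i, η i * pd e (pd i (pd i (W · a b c d))) x)
      + 2 * asym2 (fun c d =>
            ∑ i, η i * pd e (pd i (pd d (W · a b i c))) x) c d
      + (4 / ((n : ℝ) - 3)) * asym2 (fun c d =>
            gm η a c *
              ∑ i, ∑ j, η i * η j * pd e (pd j (pd i (W · b i d j))) x) c d) a b e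
    = 0

/-!
Equation (5) writes `W` as a constant-coefficient linear expression in the first derivatives of
`L`, so two derivatives of `W` are the same expression in the third derivatives
`D p q r s t u = ∂_p ∂_q ∂_r L_{stu}`. After the double contraction only two facts about `D` are
used: it is symmetric in the derivative slots and antisymmetric in `s t`. Every term then becomes
`□ ∂^i L_{aic}` or `∂_a ∂^j ∂^i L_{cij}` (up to `a ↔ c`), or vanishes as the contraction of a
symmetric with an antisymmetric index pair. The trace part of (5) contributes `−1/(n−2)` times
the same combination as the first part, whence the factor `(n−3)/(n−2)`.
-/

open Finset

section PartialDerivatives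

variable {n : ℕ}

theorem pd_neg (i : Fin n) (f : (Fin n → ℝ) → ℝ) :
    pd i (fun y => -f y) = fun y => -pd i f y := by
  funext x
  simp [pd]

theorem pd_add {f g : (Fin n → ℝ) → ℝ} {x : Fin n → ℝ} (i : Fin n)
    (hf : DifferentiableAt ℝ f x) (hg : DifferentiableAt ℝ g x) :
    pd i (fun y => f y + g y) x = pd i f x + pd i g x := by
  simp [pd, fderiv_fun_add hf hg]

theorem pd_sub {f g : (Fin n → ℝ) → ℝ} {x : Fin n → ℝ} (i : Fin n)
    (hf : DifferentiableAt ℝ f x) (hg : DifferentiableAt ℝ g x) :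
    pd i (fun y => f y - g y) x = pd i f x - pd i g x := by
  simp [pd, fderiv_fun_sub hf hg]

theorem pd_const_mul {f : (Fin n → ℝ) → ℝ} {x : Fin n → ℝ} (i : Fin n) (c : ℝ)
    (hf : DifferentiableAt ℝ f x) :
    pd i (fun y => c * f y) x = c * pd i f x := by
  simp [pd, fderiv_const_mul hf]

theorem pd_div_const {f : (Fin n → ℝ) → ℝ} {x : Fin n → ℝ} (i : Fin n) (c : ℝ)
    (hf : DifferentiableAt ℝ f x) :
    pd i (fun y => f y / c) x = pd i f x / c := by
  simpa only [div_eq_inv_mul] using pd_const_mul i c⁻¹ hf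

theorem pd_sum {ι : Type*} (s : Finset ι) {f : ι → (Fin n → ℝ) → ℝ} {x : Fin n → ℝ}
    (i : Fin n) (hf : ∀ k ∈ s, DifferentiableAt ℝ (f k) x) :
    pd i (fun y => ∑ k ∈ s, f k y) x = ∑ k ∈ s, pd i (f k) x := by
  simp [pd, fderiv_fun_sum hf]

theorem ContDiff.pd {f : (Fin n → ℝ) → ℝ} {k m : WithTop ℕ∞} (hf : ContDiff ℝ m f)
    (hkm : k + 1 ≤ m) (i : Fin n) : ContDiff ℝ k (pd i f) :=
  (hf.fderiv_right hkm).clm_apply contDiff_const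

theorem pd_comm {f : (Fin n → ℝ) → ℝ} (hf : ContDiff ℝ 2 f) (i j : Fin n) :
    pd i (pd j f) = pd j (pd i f) := by
  funext x
  have hdf : Differentiable ℝ (fderiv ℝ f) :=
    (hf.fderiv_right le_rfl).differentiable one_ne_zero
  have hsnd (v w : Fin n → ℝ) :
      fderiv ℝ (fun y => fderiv ℝ f y v) x w = fderiv ℝ (fderiv ℝ f) x w v := by
    simp [fderiv_clm_apply (hdf x) (differentiableAt_const v)]
  unfold pd
  rw [hsnd, hsnd, (hf.contDiffAt.isSymmSndFDerivAt (by simp)).eq]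

theorem pd_rhs5 (η : Fin n → ℝ) {L : (Fin n → ℝ) → Fin n → Fin n → Fin n → ℝ}
    (hL : ∀ s t u, ContDiff ℝ 2 (L · s t u)) (p : Fin n) (x : Fin n → ℝ) (a b c d : Fin n) :
    pd p (fun y => rhs5 η L y a b c d) x =
      rhs5 η (fun y s t u => pd p (L · s t u) y) x a b c d := by
  have hdiff : ∀ k s t u, Differentiable ℝ (pd k (L · s t u)) := fun k s t u =>
    ((hL s t u).pd (by norm_num) k).differentiable one_ne_zero
  simp only [rhs5, asym22]
  simp (disch := (try intros); fun_prop) only [pd_add, pd_sub, pd_const_mul, pd_div_const, pd_sum]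
  simp only [pd_comm (hL _ _ _) p]

theorem pd_pd_rhs5 (η : Fin n → ℝ) {L : (Fin n → ℝ) → Fin n → Fin n → Fin n → ℝ}
    (hL : ∀ s t u, ContDiff ℝ 3 (L · s t u)) (p q : Fin n) (x : Fin n → ℝ) (a b c d : Fin n) :
    pd q (pd p (fun y => rhs5 η L y a b c d)) x =
      rhs5 η (fun y s t u => pd q (pd p (L · s t u)) y) x a b c d := by
  have hp : pd p (fun y => rhs5 η L y a b c d) =
      fun y => rhs5 η (fun y s t u => pd p (L · s t u) y) y a b c d :=
    funext (pd_rhs5 η (fun s t u => (hL s t u).of_le (by norm_num)) p · a b c d)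
  rw [hp, pd_rhs5 η (fun s t u => (hL s t u).pd (by norm_num) p)]

end PartialDerivatives

theorem sum_sum_mul_swap {ι : Type*} [Fintype ι] (η : ι → ℝ) (F : ι → ι → ℝ) :
    ∑ i, ∑ j, η i * η j * F i j = ∑ i, ∑ j, η i * η j * F j i := by
  rw [Finset.sum_comm]
  simp only [mul_comm (η _) (η _)]

theorem sum_sum_mul_eq_zero_of_antisymm {ι : Type*} [Fintype ι] (η : ι → ℝ) {F : ι → ι → ℝ}
    (hF : ∀ i j, F i j = -F j i) : ∑ i, ∑ j, η i * η j * F i j = 0 := by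
  have h : ∑ i, ∑ j, η i * η j * F j i = -∑ i, ∑ j, η i * η j * F i j := by
    simp only [← sum_neg_distrib]
    exact sum_congr rfl fun i _ => sum_congr rfl fun j _ => by rw [hF j i]; ring
  linarith [sum_sum_mul_swap η F]

theorem sum_sum_mul_sum_eq_zero_of_antisymm {ι : Type*} [Fintype ι] (η : ι → ℝ)
    {F : ι → ι → ι → ℝ} (hF : ∀ i j k, F i j k = -F k j i) :
    ∑ i, ∑ j, η i * η j * ∑ k, η k * F i j k = 0 := by
  rw [sum_comm]
  refine sum_eq_zero fun j _ => ?_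
  calc ∑ i, η i * η j * ∑ k, η k * F i j k = η j * ∑ i, ∑ k, η i * η k * F i j k := by
        simp only [mul_sum]; congr! 2; ring
    _ = 0 := by rw [sum_sum_mul_eq_zero_of_antisymm η fun i k => hF i j k, mul_zero]

section Metric

variable {n : ℕ}

theorem gm_comm (η : Fin n → ℝ) (a b : Fin n) : gm η a b = gm η b a := by
  unfold gm; split_ifs <;> simp_all

variable {η : Fin n → ℝ} (hη : ∀ i, η i * η i = 1)
include hη

theorem sum_mul_gm_mul (c : Fin n) (f : Fin n → ℝ) : ∑ i, η i * (gm η i c * f i) = f c := by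
  simp [gm, ← mul_assoc, hη]

theorem sum_sum_gm_left (c : Fin n) (F : Fin n → Fin n → ℝ) :
    ∑ i, ∑ j, η i * η j * (gm η i c * F i j) = ∑ j, η j * F c j := by
  calc ∑ i, ∑ j, η i * η j * (gm η i c * F i j)
      = ∑ i, η i * (gm η i c * ∑ j, η j * F i j) := by
        simp only [mul_sum]; congr! 2; ring
    _ = ∑ j, η j * F c j := sum_mul_gm_mul hη c _

theorem sum_sum_gm_right (a : Fin n) (F : Fin n → Fin n → ℝ) :
    ∑ i, ∑ j, η i * η j * (gm η a j * F i j) = ∑ i, η i * F i a := by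
  rw [sum_sum_mul_swap]
  simp only [gm_comm η a]
  exact sum_sum_gm_left hη a fun i j => F j i

theorem sum_sum_gm_diag (F : Fin n → Fin n → ℝ) :
    ∑ i, ∑ j, η i * η j * (gm η i j * F i j) = ∑ i, η i * F i i := by
  calc ∑ i, ∑ j, η i * η j * (gm η i j * F i j)
      = ∑ i, η i * ∑ j, η j * (gm η j i * F i j) := by
        simp only [mul_sum]
        congr! 2 with i _ j _
        rw [gm_comm]
        ring
    _ = ∑ i, η i * F i i := by simp only [sum_mul_gm_mul hη]

end Metric

/- For `D p q r s t u = ∂_p ∂_q ∂_r L_{stu}`, `boxDiv η D s u = □ ∂^i L_{siu}` and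
`gradDoubleDiv η D p s = ∂_p ∂^j ∂^i L_{sij}`. -/
section ThirdDerivatives

variable {n : ℕ} (η : Fin n → ℝ) (D : Fin n → Fin n → Fin n → Fin n → Fin n → Fin n → ℝ)

def boxDiv (s u : Fin n) : ℝ := ∑ i, ∑ j, η i * η j * D j j i s i u

def gradDoubleDiv (p s : Fin n) : ℝ := ∑ i, ∑ j, η i * η j * D p j i s i j

variable {D} (hD₁₂ : ∀ p q r s t u, D p q r s t u = D q p r s t u)
  (hD₂₃ : ∀ p q r s t u, D p q r s t u = D p r q s t u)
  (hDanti : ∀ p q r s t u, D p q r s t u = -D p q r t s u)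
include hD₁₂ hD₂₃ hDanti

theorem sum_mul_sum_div_add_eq_gradDoubleDiv (p s : Fin n) :
    ∑ j, η j * ∑ k, η k * (D k p j s k j + D k p j j k s) = gradDoubleDiv η D p s := by
  have hzero : ∑ j, ∑ k, η j * η k * D k p j j k s = 0 :=
    sum_sum_mul_eq_zero_of_antisymm η fun j k => by grind
  simp only [mul_sum, mul_add, sum_add_distrib, ← mul_assoc]
  rw [hzero, add_zero, gradDoubleDiv, sum_sum_mul_swap]
  congr! 3 with i _ j _
  grind

omit hD₁₂ hDanti in
theorem sum_sum_rhs5_main_part (a c : Fin n) :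
    ∑ i, ∑ j, η i * η j * (D j j i a i c - D c j i a i j + (D i j i c j a - D a j i c j i)) =
      boxDiv η D a c + boxDiv η D c a - gradDoubleDiv η D a c - gradDoubleDiv η D c a := by
  have h₁ : ∑ i, ∑ j, η i * η j * D i j i c j a = boxDiv η D c a := by
    rw [sum_sum_mul_swap, boxDiv]
    congr! 3 with i _ j _
    grind
  have h₂ : ∑ i, ∑ j, η i * η j * D a j i c j i = gradDoubleDiv η D a c := by
    rw [sum_sum_mul_swap, gradDoubleDiv]
    congr! 3 with i _ j _
    grind
  simp only [mul_add, mul_sub, sum_add_distrib, sum_sub_distrib, h₁, h₂]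
  unfold boxDiv gradDoubleDiv
  ring

theorem sum_sum_integrability_rhs (a c : Fin n) :
    ∑ i, ∑ j, η i * η j * (D j j i a i c + D j j i c i a - D a j i j i c - D a j i c i j
      - D j c i a i j - D j c i j i a) =
      boxDiv η D a c + boxDiv η D c a - gradDoubleDiv η D a c - gradDoubleDiv η D c a := by
  have h₁ : ∑ i, ∑ j, η i * η j * D a j i j i c = 0 :=
    sum_sum_mul_eq_zero_of_antisymm η fun i j => by grind
  have h₂ : ∑ i, ∑ j, η i * η j * D j c i j i a = 0 :=
    sum_sum_mul_eq_zero_of_antisymm η fun i j => by grind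
  have h₃ : ∑ i, ∑ j, η i * η j * D j c i a i j = gradDoubleDiv η D c a := by
    rw [gradDoubleDiv]
    congr! 3 with i _ j _
    grind
  simp only [mul_add, mul_sub, sum_add_distrib, sum_sub_distrib, h₁, h₂, h₃]
  unfold boxDiv gradDoubleDiv
  ring

theorem sum_sum_gm_const_div_eq_zero (a c : Fin n) :
    ∑ i, ∑ j, η i * η j * (gm η a c * ∑ k, η k * (D k j i i k j + D k j i j k i)) = 0 := by
  have h₁ : ∑ i, ∑ j, η i * η j * ∑ k, η k * D k j i i k j = 0 :=
    sum_sum_mul_sum_eq_zero_of_antisymm η fun i j k => by grind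
  have h₂ : ∑ i, ∑ j, η i * η j * ∑ k, η k * D k j i j k i = 0 := by
    rw [sum_sum_mul_swap, ← h₁]
    congr! 5 with i _ j _ k _
    grind
  simp only [mul_add, sum_add_distrib, mul_left_comm _ (gm η a c), ← mul_sum, h₁, h₂, mul_zero,
    add_zero]

variable (hη : ∀ i, η i * η i = 1)
include hη

theorem sum_sum_gm_left_div (c a : Fin n) :
    ∑ i, ∑ j, η i * η j * (gm η i c * ∑ k, η k * (D k j i a k j + D k j i j k a)) =
      gradDoubleDiv η D c a := by
  rw [sum_sum_gm_left hη, ← sum_mul_sum_div_add_eq_gradDoubleDiv η hD₁₂ hD₂₃ hDanti]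
  congr! 4 with j _ k _
  grind

theorem sum_sum_gm_right_div (a c : Fin n) :
    ∑ i, ∑ j, η i * η j * (gm η a j * ∑ k, η k * (D k j i i k c + D k j i c k i)) =
      gradDoubleDiv η D a c := by
  rw [sum_sum_gm_right hη, ← sum_mul_sum_div_add_eq_gradDoubleDiv η hD₁₂ hD₂₃ hDanti]
  congr! 4 with j _ k _
  grind

omit hDanti in
theorem sum_sum_gm_diag_div (a c : Fin n) :
    ∑ i, ∑ j, η i * η j * (gm η i j * ∑ k, η k * (D k j i a k c + D k j i c k a)) =
      boxDiv η D a c + boxDiv η D c a := by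
  rw [sum_sum_gm_diag hη]
  simp only [mul_sum, mul_add, sum_add_distrib, ← mul_assoc]
  unfold boxDiv
  rw [sum_sum_mul_swap η fun i j => D j j i a i c, sum_sum_mul_swap η fun i j => D j j i c i a]
  congr 1 <;> congr! 3 <;> grind

theorem sum_sum_rhs5_contraction (hn : (n : ℝ) - 2 ≠ 0) (a c : Fin n) :
    ∑ i, ∑ j, η i * η j * (D j j i a i c - D c j i a i j + (D i j i c j a - D a j i c j i)
      - 4 / ((n : ℝ) - 2) *
        ((gm η a c * ∑ k, η k * (D k j i i k j + D k j i j k i)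
          - gm η i c * ∑ k, η k * (D k j i a k j + D k j i j k a)
          - gm η a j * ∑ k, η k * (D k j i i k c + D k j i c k i)
          + gm η i j * ∑ k, η k * (D k j i a k c + D k j i c k a)) / 4)) =
      ((n : ℝ) - 3) / ((n : ℝ) - 2) *
        ∑ i, ∑ j, η i * η j * (D j j i a i c + D j j i c i a - D a j i j i c - D a j i c i j
          - D j c i a i j - D j c i j i a) := by
  calc _ = ∑ i, ∑ j, η i * η j * (D j j i a i c - D c j i a i j + (D i j i c j a - D a j i c j i))
        - ((n : ℝ) - 2)⁻¹ *
          (∑ i, ∑ j, η i * η j * (gm η a c * ∑ k, η k * (D k j i i k j + D k j i j k i))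
          - ∑ i, ∑ j, η i * η j * (gm η i c * ∑ k, η k * (D k j i a k j + D k j i j k a))
          - ∑ i, ∑ j, η i * η j * (gm η a j * ∑ k, η k * (D k j i i k c + D k j i c k i))
          + ∑ i, ∑ j, η i * η j * (gm η i j * ∑ k, η k * (D k j i a k c + D k j i c k a))) := by
        simp only [← sum_sub_distrib, ← sum_add_distrib, mul_sum _ _ ((n : ℝ) - 2)⁻¹]
        congr! 2
        ring
    _ = _ := by
        rw [sum_sum_rhs5_main_part η hD₂₃, sum_sum_gm_const_div_eq_zero η hD₁₂ hD₂₃ hDanti,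
          sum_sum_gm_left_div η hD₁₂ hD₂₃ hDanti hη, sum_sum_gm_right_div η hD₁₂ hD₂₃ hDanti hη,
          sum_sum_gm_diag_div η hD₁₂ hD₂₃ hη, sum_sum_integrability_rhs η hD₁₂ hD₂₃ hDanti]
        field_simp
        ring

end ThirdDerivatives

theorem doubly_contracted_integrability_condition_general
    (n : ℕ) (hn : 3 ≤ n) (η : Fin n → ℝ) (hη : ∀ i, η i = 1 ∨ η i = -1)
    (W : (Fin n → ℝ) → Fin n → Fin n → Fin n → Fin n → ℝ)
    (L : (Fin n → ℝ) → Fin n → Fin n → Fin n → ℝ)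
    (hLC3 : ∀ a b c, ContDiff ℝ 3 (fun x => L x a b c))
    (hLasym : ∀ x a b c, L x a b c = - L x b a c)
    (hEq5 : Eq5 η W L) :
    ∀ x a c,
      (∑ i, ∑ j, η i * η j * pd j (pd i (W · a i c j)) x) =
        (((n : ℝ) - 3) / ((n : ℝ) - 2)) *
          ∑ i, ∑ j, η i * η j *
            (pd j (pd j (pd i (L · a i c))) x
              + pd j (pd j (pd i (L · c i a))) x
              - pd a (pd j (pd i (L · j i c))) x
              - pd a (pd j (pd i (L · c i j))) x
              - pd j (pd c (pd i (L · a i j))) x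
              - pd j (pd c (pd i (L · j i a))) x) := by
  intro x a c
  have hη2 (i : Fin n) : η i * η i = 1 := by rcases hη i with h | h <;> simp [h]
  have hn2 : (n : ℝ) - 2 ≠ 0 := by
    have : (3 : ℝ) ≤ n := by exact_mod_cast hn
    linarith
  have hW (b d : Fin n) : (W · a b c d) = (rhs5 η L · a b c d) := funext (hEq5 · a b c d)
  have hD₁₂ (p q r s t u : Fin n) :
      pd p (pd q (pd r (L · s t u))) x = pd q (pd p (pd r (L · s t u))) x := by
    rw [pd_comm ((hLC3 s t u).pd (by norm_num) r)]
  have hD₂₃ (p q r s t u : Fin n) :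
      pd p (pd q (pd r (L · s t u))) x = pd p (pd r (pd q (L · s t u))) x := by
    rw [pd_comm ((hLC3 s t u).of_le (by norm_num)) q r]
  have hDanti (p q r s t u : Fin n) :
      pd p (pd q (pd r (L · s t u))) x = -pd p (pd q (pd r (L · t s u))) x := by
    rw [show (L · s t u) = fun y => -L y t s u from funext (hLasym · s t u), pd_neg, pd_neg, pd_neg]
  simp only [hW, pd_pd_rhs5 η hLC3]
  simp only [rhs5, asym22]
  exact sum_sum_rhs5_contraction η hD₁₂ hD₂₃ hDanti hη2 hn2 a c

/-- **Double contraction of the integrability condition (equation (7), flat space).**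
If `W` (`C²`, with the algebraic symmetries and vanishing trace) and `L` (`C³`,
`L_{abc} = L_{[ab]c}`, `L_{ab}{}^b = 0`) satisfy equation (5) on flat `ℝⁿ`, then
`W^{ai}{}_{cj;i}{}^j = ((n−3)/(n−2)) ( L^{ai}{}_{c;ij}{}^j + L_c{}^{ia}{}_{;ij}{}^j
 − L^{ji}{}_{c;ij}{}^a − L_c{}^{ij}{}_{;ij}{}^a − L^{ai}{}_{j;ic}{}^j − L_j{}^{ia}{}_{;ic}{}^j )`. -/
theorem doubly_contracted_integrability_condition
    (n : ℕ) (hn : 3 ≤ n) (η : Fin n → ℝ) (hη : ∀ i, η i = 1 ∨ η i = -1)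
    (W : (Fin n → ℝ) → Fin n → Fin n → Fin n → Fin n → ℝ)
    (hWC2 : ∀ a b c d, ContDiff ℝ 2 (fun x => W x a b c d))
    (hW1 : ∀ x a b c d, W x a b c d = - W x b a c d)
    (hW2 : ∀ x a b c d, W x a b c d = - W x a b d c)
    (hW3 : ∀ x a b c d, W x a b c d = W x c d a b)
    (hWtr : ∀ x b d, ∑ a, η a * W x a b a d = 0)
    (L : (Fin n → ℝ) → Fin n → Fin n → Fin n → ℝ)
    (hLC3 : ∀ a b c, ContDiff ℝ 3 (fun x => L x a b c))
    (hLasym : ∀ x a b c, L x a b c = - L x b a c)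
    (hgauge : ∀ x a, ∑ b, η b * L x a b b = 0)
    (hEq5 : Eq5 η W L) :
    ∀ x a c,
      (∑ i, ∑ j, η i * η j * pd j (pd i (W · a i c j)) x) =
        (((n : ℝ) - 3) / ((n : ℝ) - 2)) *
          ∑ i, ∑ j, η i * η j *
            (pd j (pd j (pd i (L · a i c))) x
              + pd j (pd j (pd i (L · c i a))) x
              - pd a (pd j (pd i (L · j i c))) x
              - pd a (pd j (pd i (L · c i j))) x
              - pd j (pd c (pd i (L · a i j))) x
              - pd j (pd c (pd i (L · j i a))) x) :=
  doubly_contracted_integrability_condition_general n hn η hη W L hLC3 hLasym hEq5
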